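/- Let κ₁ < κ₂ < κ₃ and w₂, w₃ > 0. Set γ_S = (κ₁ + w₂κ₂ + w₃κ₃)/(1 + w₂ + w₃) and γ₁ = w₃(κ₃ - γ_S)/(w₃(κ₃ - γ_S) + w₂(κ₂ - γ_S)), and assume γ_S ≠ κ₂. Then the weights are recovered by the inverse formulas w₂ = (γ₁ - 1)(γ_S - κ₁)/(γ_S - κ₂) and w₃ = γ₁(γ_S - κ₁)/(κ₃ - γ_S). -/
import Mathlib


/-- Inverse of the divisor map for `Gr^TP(1,3)`: the weights are recovered
from the divisor coordinates. -/
theorem grTP13_inverse_divisor_map (κ₁ κ₂ κ₃ w₂ w₃ : ℝ)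
    (h12 : κ₁ < κ₂) (h23 : κ₂ < κ₃) (hw₂ : 0 < w₂) (hw₃ : 0 < w₃)
    (γS γ₁ : ℝ)
    (hγS : γS = (κ₁ + w₂ * κ₂ + w₃ * κ₃) / (1 + w₂ + w₃))
    (hγ₁ : γ₁ = w₃ * (κ₃ - γS) / (w₃ * (κ₃ - γS) + w₂ * (κ₂ - γS)))
    (hne : γS ≠ κ₂) :
    w₂ = (γ₁ - 1) * (γS - κ₁) / (γS - κ₂) ∧
      w₃ = γ₁ * (γS - κ₁) / (κ₃ - γS) := by
  have hs : (0:ℝ) < 1 + w₂ + w₃ := by linarith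
  have hkey : γS * (1 + w₂ + w₃) = κ₁ + w₂ * κ₂ + w₃ * κ₃ := by
    rw [hγS]; field_simp
  have h1 : κ₁ < γS := by nlinarith
  have h3 : γS < κ₃ := by nlinarith
  have hD : w₃ * (κ₃ - γS) + w₂ * (κ₂ - γS) = γS - κ₁ := by linarith
  have h1' : γS - κ₁ ≠ 0 := by linarith
  have h3' : κ₃ - γS ≠ 0 := by linarith
  have h2' : γS - κ₂ ≠ 0 := sub_ne_zero.mpr hne
  rw [hD] at hγ₁
  constructor
  · rw [hγ₁]; field_simp; linear_combination -hD
  · rw [hγ₁]; field_simp
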